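/- arXiv:2510.05033 — 3 statements merged into one kernel-verified Lean document; each statement's English description precedes it below -/
import Mathlib

section
/- Causal abstraction is compositional: if τ : F_L∘ι₁ ⇒ F_M is a natural transformation with deterministic components witnessing F_M as an abstraction of F_L, and σ : F_M∘ι₂ ⇒ F_H witnesses F_H as an abstraction of F_M, then the composite natural transformation σ ∘ (τ ∘ ι₂) : F_L ∘ (ι₁∘ι₂) ⇒ F_H has deterministic components, witnessing F_H as an abstraction of F_L. -/
open CategoryTheory MonoidalCategory

universe v u

/-- A Markov category: a symmetric monoidal category in which every object
carries a commutative comonoid structure (copy and discard), compatible with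
the monoidal structure, and whose monoidal unit is terminal. -/
class MarkovCategory (C : Type u) [Category.{v} C] [MonoidalCategory C]
    [SymmetricCategory C] where
  copy : ∀ X : C, X ⟶ X ⊗ X
  discard : ∀ X : C, X ⟶ 𝟙_ C
  copy_assoc : ∀ X : C,
    copy X ≫ (copy X ▷ X) ≫ (α_ X X X).hom = copy X ≫ (X ◁ copy X)
  copy_discard_left : ∀ X : C,
    copy X ≫ (discard X ▷ X) ≫ (λ_ X).hom = 𝟙 X
  copy_comm : ∀ X : C, copy X ≫ (β_ X X).hom = copy X
  copy_tensor : ∀ X Y : C,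
    copy (X ⊗ Y) = (copy X ⊗ₘ copy Y) ≫ tensorμ X X Y Y
  discard_tensor : ∀ X Y : C,
    discard (X ⊗ Y) = (discard X ⊗ₘ discard Y) ≫ (λ_ (𝟙_ C)).hom
  copy_unit : copy (𝟙_ C) = (λ_ (𝟙_ C)).inv
  unit_terminal : ∀ {X : C} (f g : X ⟶ 𝟙_ C), f = g

/-- A morphism in a Markov category is deterministic if it commutes with the
copy maps. -/
def Deterministic {C : Type u} [Category.{v} C] [MonoidalCategory C]
    [SymmetricCategory C] [_root_.MarkovCategory C] {X Y : C} (f : X ⟶ Y) : Prop :=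
  f ≫ _root_.MarkovCategory.copy Y = _root_.MarkovCategory.copy X ≫ (f ⊗ₘ f)

theorem Deterministic.comp {C : Type u} [Category.{v} C] [MonoidalCategory C]
    [SymmetricCategory C] [_root_.MarkovCategory C] {X Y Z : C} {f : X ⟶ Y} {g : Y ⟶ Z}
    (hf : _root_.Deterministic f) (hg : _root_.Deterministic g) :
    _root_.Deterministic (f ≫ g) :=
  calc (f ≫ g) ≫ _root_.MarkovCategory.copy Z
      = f ≫ _root_.MarkovCategory.copy Y ≫ (g ⊗ₘ g) := by rw [Category.assoc, hg]
    _ = _root_.MarkovCategory.copy X ≫ (f ⊗ₘ f) ≫ (g ⊗ₘ g) := by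
        rw [← Category.assoc, hf, Category.assoc]
    _ = _root_.MarkovCategory.copy X ≫ ((f ≫ g) ⊗ₘ (f ≫ g)) := by
        rw [tensorHom_comp_tensorHom]

/-- Compositionality of causal abstraction: if `τ : F_L ∘ ι₁ ⟹ F_M` and
`σ : F_M ∘ ι₂ ⟹ F_H` are natural transformations with deterministic
components (witnessing `F_M` as an abstraction of `F_L` and `F_H` as an
abstraction of `F_M`), then the composite natural transformation
`σ ∘ (τ ∘ ι₂) : F_L ∘ (ι₁ ∘ ι₂) ⟹ F_H` has deterministic components. -/
theorem abstraction_compositional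
    {FreeL FreeM FreeH M : Type u}
    [Category.{v} FreeL] [Category.{v} FreeM] [Category.{v} FreeH]
    [Category.{v} M] [MonoidalCategory M] [SymmetricCategory M]
    [_root_.MarkovCategory M]
    (ι₁ : FreeM ⥤ FreeL) (ι₂ : FreeH ⥤ FreeM)
    (F_L : FreeL ⥤ M) (F_M : FreeM ⥤ M) (F_H : FreeH ⥤ M)
    (τ : ι₁ ⋙ F_L ⟶ F_M) (σ : ι₂ ⋙ F_M ⟶ F_H)
    (hτ : ∀ X : FreeM, _root_.Deterministic (τ.app X))
    (hσ : ∀ X : FreeH, _root_.Deterministic (σ.app X)) :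
    ∀ X : FreeH,
      _root_.Deterministic (((CategoryTheory.Functor.whiskerLeft ι₂ τ) ≫ σ :
        ι₂ ⋙ ι₁ ⋙ F_L ⟶ F_H).app X) :=
  fun X => (hτ (ι₂.obj X)).comp (hσ X)
end

section
/- Consider finite sets A, B with a probability kernel p(·|b) on A for each b ∈ B, surjections τ_A : A → Ã and τ_B : B → B̃, and a kernel p̃(·|b̃) on Ã for each b̃ ∈ B̃. Suppose there is a distribution on A × B with positive marginals and that the 'effect-focused' abstraction condition holds: ε_A ∘ p̃ = p ∘ ε_B as kernels B̃ → A, where ε_A(a|ã) = P(a|ã) and ε_B(b|b̃) = P(b|b̃) are the conditional kernels. Then for all a ∈ A with P(a) > 0 and b̃ ∈ B̃ with positive probability: P(a | b̃) = P(a | τ_A(a)) · P(τ_A(a) | b̃). -/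
open Finset

/-! The effect-focused condition, read at a low-level effect `a`, collapses on the left to
`P(a | τA a) · p̃(τA a | b̃)` and on the right to `P(a | b̃)`. So `P(· | b̃)` factors through the
cluster of `a` with within-cluster weights `P(a | τA a)`; summing over the cluster identifies the
cluster factor with `P(τA a | b̃)`. -/

section ClusterKernels

variable {α γ K : Type*} [DivisionSemiring K]

theorem sum_clusterKernel_mul [Fintype γ] [DecidableEq γ] (τ : α → γ) (w : α → K)
    (Z f : γ → K) (a : α) :
    ∑ c, (if τ a = c then w a else 0) / Z c * f c = w a / Z (τ a) * f (τ a) := by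
  simp only [ite_div, ite_mul, zero_div, zero_mul, Finset.sum_ite_eq, Finset.mem_univ, if_true]

theorem sum_mul_clusterKernel [Fintype α] [DecidableEq γ] (τ : α → γ) (π g : α → K)
    (Z : γ → K) (c : γ) :
    ∑ x, g x * ((if τ x = c then π x else 0) / Z c) =
      (∑ x ∈ univ.filter (fun x => τ x = c), g x * π x) / Z c := by
  rw [Finset.sum_filter, Finset.sum_div]
  refine Finset.sum_congr rfl fun x _ => ?_
  split_ifs <;> simp [mul_div_assoc]

end ClusterKernels

theorem eq_div_mul_sum_fiber_of_factorization {α γ K : Type*} [Fintype α] [DecidableEq γ]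
    [Semifield K] (τ : α → γ) (w : α → K) (Z g : γ → K)
    (hZ : ∀ c, Z c = ∑ a ∈ univ.filter (fun a => τ a = c), w a) (F : α → K)
    (hF : ∀ a, F a = w a / Z (τ a) * g (τ a)) (a : α) :
    F a = w a / Z (τ a) * ∑ a' ∈ univ.filter (fun a' => τ a' = τ a), F a' := by
  by_cases hZa : Z (τ a) = 0
  · simp [hF, hZa]
  have hfiber : ∑ a' ∈ univ.filter (fun a' => τ a' = τ a), F a' = g (τ a) := by
    calc ∑ a' ∈ univ.filter (fun a' => τ a' = τ a), F a'
        = ∑ a' ∈ univ.filter (fun a' => τ a' = τ a), w a' / Z (τ a) * g (τ a) :=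
          Finset.sum_congr rfl fun a' ha' => by rw [hF, (Finset.mem_filter.mp ha').2]
      _ = Z (τ a) / Z (τ a) * g (τ a) := by rw [← Finset.sum_mul, ← Finset.sum_div, hZ]
      _ = g (τ a) := by rw [div_self hZa, one_mul]
  rw [hfiber, hF]

theorem effect_focused_sufficient_statistic_general
    {A B Ac Bc : Type} [Fintype A] [Fintype B] [Fintype Ac] [Fintype Bc]
    [DecidableEq Ac] [DecidableEq Bc]
    (τA : A → Ac) (τB : B → Bc)
    (π : B → NNReal)
    (p : B → A → NNReal)
    (pt : Bc → Ac → NNReal)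
    -- marginal of A, its clustered version, and the clustered marginal of B
    (PA : A → NNReal)
    (PAc : Ac → NNReal)
    (hPAc : ∀ at_, PAc at_ = ∑ a ∈ univ.filter (fun a => τA a = at_), PA a)
    (PBc : Bc → NNReal)
    -- the conditional kernels ε_A and ε_B
    (εA : Ac → A → NNReal)
    (hεA : ∀ at_ a, εA at_ a = (if τA a = at_ then PA a else 0) / PAc at_)
    (εB : Bc → B → NNReal)
    (hεB : ∀ bt b, εB bt b = (if τB b = bt then π b else 0) / PBc bt)
    -- the conditional P(a | b̃) computed from the joint distribution
    (PAgB : A → Bc → NNReal)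
    (hPAgB : ∀ a bt,
      PAgB a bt = (∑ b ∈ univ.filter (fun b => τB b = bt), p b a * π b) / PBc bt)
    -- effect-focused abstraction condition: ε_A ∘ pt = p ∘ ε_B as kernels B̃ → A
    (hcomm : ∀ bt a,
      ∑ at_, εA at_ a * pt bt at_ = ∑ b, p b a * εB bt b) :
    ∀ a, 0 < PA a → ∀ bt,
      PAgB a bt =
        (PA a / PAc (τA a)) *
          ∑ a' ∈ univ.filter (fun a' => τA a' = τA a), PAgB a' bt := by
  intro a _ bt
  have hfactor : ∀ a, PAgB a bt = PA a / PAc (τA a) * pt bt (τA a) := fun a => by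
    rw [hPAgB, ← sum_mul_clusterKernel, ← sum_clusterKernel_mul]
    simpa only [hεA, hεB] using (hcomm bt a).symm
  exact eq_div_mul_sum_fiber_of_factorization τA PA PAc (pt bt) hPAc (PAgB · bt) hfactor a

/-- Effect-focused abstraction implies sufficiency: with a joint distribution
on `A × B` generated by a prior `π` on `B` and a kernel `p(a|b)`, surjective
coarsenings `τA, τB`, a high-level kernel `pt(ã|b̃)`, and conditional kernels
`εA(a|ã) = P(a|ã)`, `εB(b|b̃) = P(b|b̃)`, if the effect-focused condition
`εA ∘ pt = p ∘ εB` holds (as kernels `B̃ → A`), then for every `a` with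
`P(a) > 0` and every cluster `b̃` of positive probability,
`P(a|b̃) = P(a|τA a) · P(τA a | b̃)`. -/
theorem effect_focused_sufficient_statistic
    {A B Ac Bc : Type} [Fintype A] [Fintype B] [Fintype Ac] [Fintype Bc]
    [DecidableEq Ac] [DecidableEq Bc]
    (τA : A → Ac) (τB : B → Bc)
    (hτA : Function.Surjective τA) (hτB : Function.Surjective τB)
    (π : B → NNReal) (hπ : ∑ b, π b = 1) (hπpos : ∀ b, 0 < π b)
    (p : B → A → NNReal) (hp : ∀ b, ∑ a, p b a = 1)
    (pt : Bc → Ac → NNReal) (hpt : ∀ bt, ∑ at_, pt bt at_ = 1)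
    -- marginal of A, its clustered version, and the clustered marginal of B
    (PA : A → NNReal) (hPA : ∀ a, PA a = ∑ b, p b a * π b)
    (PAc : Ac → NNReal)
    (hPAc : ∀ at_, PAc at_ = ∑ a ∈ univ.filter (fun a => τA a = at_), PA a)
    (hPAcpos : ∀ at_, 0 < PAc at_)
    (PBc : Bc → NNReal)
    (hPBc : ∀ bt, PBc bt = ∑ b ∈ univ.filter (fun b => τB b = bt), π b)
    (hPBcpos : ∀ bt, 0 < PBc bt)
    -- the conditional kernels ε_A and ε_B
    (εA : Ac → A → NNReal)
    (hεA : ∀ at_ a, εA at_ a = (if τA a = at_ then PA a else 0) / PAc at_)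
    (εB : Bc → B → NNReal)
    (hεB : ∀ bt b, εB bt b = (if τB b = bt then π b else 0) / PBc bt)
    -- the conditional P(a | b̃) computed from the joint distribution
    (PAgB : A → Bc → NNReal)
    (hPAgB : ∀ a bt,
      PAgB a bt = (∑ b ∈ univ.filter (fun b => τB b = bt), p b a * π b) / PBc bt)
    -- effect-focused abstraction condition: ε_A ∘ pt = p ∘ ε_B as kernels B̃ → A
    (hcomm : ∀ bt a,
      ∑ at_, εA at_ a * pt bt at_ = ∑ b, p b a * εB bt b) :
    ∀ a, 0 < PA a → ∀ bt,
      PAgB a bt =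
        (PA a / PAc (τA a)) *
          ∑ a' ∈ univ.filter (fun a' => τA a' = τA a), PAgB a' bt :=
  effect_focused_sufficient_statistic_general τA τB π p pt PA PAc hPAc PBc εA hεA εB hεB PAgB hPAgB
    hcomm
end

section
/- Let A, B, C be finite sets with joint distribution p(a,b,c) = p(c|b)·p(b|a)·p(a), and τ_B : B → B̃ a surjection. If the 'cause-based' condition holds — for all a, b with p(a) > 0: p(b|a) = p(b | τ_B(b)) · p(τ_B(b)|a), where p(b|b̃) is the conditional of b given its cluster under the joint distribution — then the coarsened distribution factorizes over the chain: p(a, b̃, c) = p(c|b̃)·p(b̃|a)·p(a). -/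
open Finset

theorem sum_mul_eq_sum_mul_mul_of_forall_eq_mul {ι R : Type*} [CommSemiring R] {s : Finset ι}
    {f w v : ι → R} {S : R} (h : ∀ i ∈ s, w i = v i * S) :
    ∑ i ∈ s, f i * w i = (∑ i ∈ s, f i * v i) * S := by
  rw [sum_mul]
  refine sum_congr rfl fun i hi => ?_
  rw [h i hi, mul_assoc]

theorem cause_based_coarsening_factorizes_general
    {A B C Bc : Type} [Fintype B]
    [DecidableEq Bc]
    (τB : B → Bc)
    (pA : A → NNReal) (hpApos : ∀ a, 0 < pA a)
    (pBA : A → B → NNReal)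
    (pCB : B → C → NNReal)
    -- conditional of b given its cluster
    (condB : B → NNReal)
    -- cause-based condition: p(b|a) = p(b|τB b) · p(τB b|a)
    (hcause : ∀ a b, 0 < pA a →
      pBA a b = condB b * ∑ b' ∈ univ.filter (fun b' => τB b' = τB b), pBA a b') :
    ∀ a bt c,
      ∑ b ∈ univ.filter (fun b => τB b = bt), pCB b c * pBA a b * pA a =
        (∑ b ∈ univ.filter (fun b => τB b = bt), pCB b c * condB b) *
          (∑ b ∈ univ.filter (fun b => τB b = bt), pBA a b) * pA a := by
  intro a bt c
  rw [← sum_mul]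
  congr 1
  -- on the fiber of `bt`, `p(b|a)` is `p(b|b̃)` times the constant cluster mass `p(b̃|a)`
  refine sum_mul_eq_sum_mul_mul_of_forall_eq_mul fun b hb => ?_
  rw [hcause a b (hpApos a), (mem_filter.mp hb).2]

/-- Cause-based coarsening preserves the Markov chain factorization: if for
all `a, b` the mechanism factorizes as `p(b|a) = p(b|τB b)·p(τB b|a)` (the
within-cluster distribution of `B` is independent of `a`), then the coarsened
joint distribution of the chain `A → B → C` factorizes over the coarsened
chain, with `p(b̃|a) = ∑_{b∈τB⁻¹(b̃)} p(b|a)` and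
`p(c|b̃) = ∑_{b∈τB⁻¹(b̃)} p(c|b)·p(b|b̃)`. -/
theorem cause_based_coarsening_factorizes
    {A B C Bc : Type} [Fintype A] [Fintype B] [Fintype C] [Fintype Bc]
    [DecidableEq Bc]
    (τB : B → Bc) (hτB : Function.Surjective τB)
    (pA : A → NNReal) (hpA : ∑ a, pA a = 1) (hpApos : ∀ a, 0 < pA a)
    (pBA : A → B → NNReal) (hpBA : ∀ a, ∑ b, pBA a b = 1)
    (pCB : B → C → NNReal) (hpCB : ∀ b, ∑ c, pCB b c = 1)
    -- marginal of B and of its clusters under the joint distribution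
    (PB : B → NNReal) (hPB : ∀ b, PB b = ∑ a, pBA a b * pA a)
    (PBc : Bc → NNReal)
    (hPBc : ∀ bt, PBc bt = ∑ b ∈ univ.filter (fun b => τB b = bt), PB b)
    (hPBcpos : ∀ bt, 0 < PBc bt)
    -- conditional of b given its cluster
    (condB : B → NNReal) (hcondB : ∀ b, condB b = PB b / PBc (τB b))
    -- cause-based condition: p(b|a) = p(b|τB b) · p(τB b|a)
    (hcause : ∀ a b, 0 < pA a →
      pBA a b = condB b * ∑ b' ∈ univ.filter (fun b' => τB b' = τB b), pBA a b') :
    ∀ a bt c,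
      ∑ b ∈ univ.filter (fun b => τB b = bt), pCB b c * pBA a b * pA a =
        (∑ b ∈ univ.filter (fun b => τB b = bt), pCB b c * condB b) *
          (∑ b ∈ univ.filter (fun b => τB b = bt), pBA a b) * pA a :=
  cause_based_coarsening_factorizes_general τB pA hpApos pBA pCB condB hcause
end
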